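/- Let A be a partial H-module algebra. Then the partial smash product A#H := (A⊗H-with-smash-multiplication)(1_A⊗1_H), with multiplication (a#h)(b#g) = Σ a(h₁·b) # h₂g, is an associative unital algebra with identity 1_A#1_H, and the map f: A → A#H, a ↦ a#1_H, is an injective algebra homomorphism. -/

import Mathlib

/-!
Work in the convolution algebra `(H →ₗ A ⊗ H, ⋆)`. With `ρ_b h = (h·b) ⊗ 1` and
`ι_g h = 1 ⊗ hg` one has `(a # h)(b # g) = (a ⊗ 1) · (ρ_b ⋆ ι_g)(h)`. In this language the
partial-action axioms say `ρ_{bc} = ρ_b ⋆ ρ_c` and `ρ_{g·c} = ρ_1 ⋆ (ρ_c ∘ (· g))`, so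
associativity of `⋆` together with `ρ_b ⋆ ρ_1 = ρ_b` gives `ρ_{b (g·c)} = ρ_b ⋆ (ρ_c ∘ (· g))`,
i.e. `h·(b (g·c)) = Σ (h₁·b)(h₂g·c)`. Using this and multiplicativity of `Δ`, both bracketings
of `(a # h)(b # g)(c # l)` equal `(a ⊗ 1) · (ρ_b ⋆ ((ρ_c ⋆ ι_l) ∘ (· g)))(h)`. Hence the
multiplication is associative on all of `A ⊗ H`, and `1 ⊗ 1` is a left unit there and an
idempotent, which makes it a two-sided unit of the corner `(A ⊗ H)(1 ⊗ 1)`.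
-/

open TensorProduct

noncomputable section

variable (k : Type*) [Field k]

/-- The "Sweedler sum" `h ↦ Σ f(h₁) * g(h₂)`. -/
def sweedler {H A : Type*} [Ring H] [HopfAlgebra k H]
    [Ring A] [Algebra k A] (f g : H →ₗ[k] A) : H →ₗ[k] A :=
  (LinearMap.mul' k A) ∘ₗ (TensorProduct.map f g) ∘ₗ Coalgebra.comul

/-- A (left) partial `H`-module algebra structure on a unital algebra `A`:
`1_H · a = a`, `h · (ab) = Σ (h₁·a)(h₂·b)` and `h·(g·b) = Σ (h₁·1)((h₂ g)·b)`. -/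
structure PartialModuleAlgebra (H A : Type*) [Ring H] [HopfAlgebra k H]
    [Ring A] [Algebra k A] where
  act : H →ₗ[k] A →ₗ[k] A
  one_act : ∀ a : A, act 1 a = a
  act_mul : ∀ (h : H) (a b : A),
    act h (a * b) = sweedler k (act.flip a) (act.flip b) h
  act_act : ∀ (h g : H) (b : A),
    act h (act g b) =
      sweedler k (act.flip 1) ((act.flip b) ∘ₗ LinearMap.mulRight k g) h

variable {H A : Type*} [Ring H] [HopfAlgebra k H] [Ring A] [Algebra k A]


/-- `μ` realizes the smash-product multiplication on `A ⊗ H`: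
`(a # h)(b # g) = Σ a(h₁·b) # h₂ g`. -/
def SmashMulFormula (ξ : PartialModuleAlgebra k H A)
    (μ : (A ⊗[k] H) →ₗ[k] (A ⊗[k] H) →ₗ[k] (A ⊗[k] H)) : Prop :=
  ∀ (a b : A) (h g : H),
    μ (a ⊗ₜ[k] h) (b ⊗ₜ[k] g) =
      (TensorProduct.map ((LinearMap.mulLeft k a) ∘ₗ ξ.act.flip b)
        (LinearMap.mulRight k g)) (Coalgebra.comul h)


open Coalgebra WithConv

section Convolution

variable {R C B : Type*} [CommSemiring R] [Semiring C] [Bialgebra R C] [Semiring B] [Algebra R B]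

lemma LinearMap.convMul_comp_mulRight (f f' : C →ₗ[R] B) {g : C} {ι : Type*}
    (r : Coalgebra.Repr R g ι) :
    toConv ((toConv f * toConv f').ofConv ∘ₗ LinearMap.mulRight R g) =
      ∑ i ∈ r.index, toConv (f ∘ₗ LinearMap.mulRight R (r.left i)) *
        toConv (f' ∘ₗ LinearMap.mulRight R (r.right i)) := by
  ext h
  rw [LinearMap.comp_apply, LinearMap.mulRight_apply, ((ℛ R h).mul r).convMul_apply,
    Coalgebra.Repr.mul_index, Finset.sum_product, Finset.sum_comm, ofConv_sum,
    LinearMap.sum_apply]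
  simp [(ℛ R h).convMul_apply]

end Convolution

namespace PartialModuleAlgebra

variable {k} (ξ : PartialModuleAlgebra k H A)

lemma act_flip_mul (b c : A) :
    toConv (ξ.act.flip (b * c)) = toConv (ξ.act.flip b) * toConv (ξ.act.flip c) := by
  ext h
  exact ξ.act_mul h b c

lemma act_flip_mul_one (b : A) :
    toConv (ξ.act.flip b) * toConv (ξ.act.flip 1) = toConv (ξ.act.flip b) := by
  rw [← act_flip_mul, mul_one]

lemma act_flip_act (g : H) (c : A) :
    toConv (ξ.act.flip (ξ.act g c)) =
      toConv (ξ.act.flip 1) * toConv (ξ.act.flip c ∘ₗ LinearMap.mulRight k g) := by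
  ext h
  exact ξ.act_act h g c

lemma act_flip_mul_act (b : A) (g : H) (c : A) :
    toConv (ξ.act.flip (b * ξ.act g c)) =
      toConv (ξ.act.flip b) * toConv (ξ.act.flip c ∘ₗ LinearMap.mulRight k g) := by
  rw [act_flip_mul, act_flip_act, ← mul_assoc, act_flip_mul_one]

def actTmulOne (b : A) : WithConv (H →ₗ[k] A ⊗[k] H) :=
  toConv ((Algebra.TensorProduct.includeLeft : A →ₐ[k] A ⊗[k] H).toLinearMap ∘ₗ ξ.act.flip b)

/-- `h ↦ (1 # h)(b # g) = Σ (h₁·b) ⊗ h₂g`, as an element of the convolution algebra. -/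
def smashRight (b : A) (g : H) : WithConv (H →ₗ[k] A ⊗[k] H) :=
  ξ.actTmulOne b * toConv ((Algebra.TensorProduct.includeRight : H →ₐ[k] A ⊗[k] H).toLinearMap ∘ₗ
    LinearMap.mulRight k g)

lemma actTmulOne_mul_act (b : A) (g : H) (c : A) :
    ξ.actTmulOne (b * ξ.act g c) =
      ξ.actTmulOne b * toConv ((ξ.actTmulOne c).ofConv ∘ₗ LinearMap.mulRight k g) := by
  ext1
  rw [actTmulOne, ofConv_toConv, ← ofConv_toConv (ξ.act.flip _), act_flip_mul_act]
  exact LinearMap.algHom_comp_convMul_distrib _ _ _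

lemma smashRight_comp_mulRight (c : A) (l : H) {g : H} {ι : Type*} (r : Coalgebra.Repr k g ι) :
    toConv ((ξ.smashRight c l).ofConv ∘ₗ LinearMap.mulRight k g) =
      ∑ i ∈ r.index, toConv ((ξ.actTmulOne c).ofConv ∘ₗ LinearMap.mulRight k (r.left i)) *
        toConv ((Algebra.TensorProduct.includeRight : H →ₐ[k] A ⊗[k] H).toLinearMap ∘ₗ
          LinearMap.mulRight k (r.right i * l)) := by
  rw [smashRight, LinearMap.convMul_comp_mulRight _ _ r]
  congr! 3 with i
  ext h
  simp [mul_assoc]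

lemma smashRight_apply_one (b : A) (g : H) : ξ.smashRight b g 1 = b ⊗ₜ g := by
  simp [smashRight, actTmulOne, Algebra.TensorProduct.one_def, ξ.one_act]

end PartialModuleAlgebra

namespace SmashMulFormula

open PartialModuleAlgebra

variable {k} {ξ : PartialModuleAlgebra k H A} {μ : (A ⊗[k] H) →ₗ[k] (A ⊗[k] H) →ₗ[k] (A ⊗[k] H)}
  (hμ : SmashMulFormula k ξ μ)
include hμ

lemma tmul_tmul_eq_sum (a b : A) {h : H} (g : H) {ι : Type*} (r : Coalgebra.Repr k h ι) :
    μ (a ⊗ₜ h) (b ⊗ₜ g) = ∑ i ∈ r.index, (a * ξ.act (r.left i) b) ⊗ₜ (r.right i * g) := by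
  simp [hμ a b h g, ← r.eq]

lemma tmul_tmul (a b : A) (h g : H) : μ (a ⊗ₜ h) (b ⊗ₜ g) = (a ⊗ₜ 1) * ξ.smashRight b g h := by
  rw [hμ.tmul_tmul_eq_sum a b g (ℛ k h), smashRight, (ℛ k h).convMul_apply, Finset.mul_sum]
  simp [actTmulOne, Algebra.TensorProduct.tmul_mul_tmul]

lemma tmul_tmul_tmul_left (a b c : A) (h g l : H) :
    μ (μ (a ⊗ₜ h) (b ⊗ₜ g)) (c ⊗ₜ l) =
      (a ⊗ₜ 1) * (ξ.actTmulOne b *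
        toConv ((ξ.smashRight c l).ofConv ∘ₗ LinearMap.mulRight k g)) h := by
  rw [hμ.tmul_tmul_eq_sum a b g (ℛ k h), map_sum, LinearMap.sum_apply,
    (ℛ k h).convMul_apply, Finset.mul_sum]
  refine Finset.sum_congr rfl fun i _ => ?_
  simp [hμ.tmul_tmul, actTmulOne, ← mul_assoc, Algebra.TensorProduct.tmul_mul_tmul]

lemma tmul_tmul_tmul_right (a b c : A) (h g l : H) :
    μ (a ⊗ₜ h) (μ (b ⊗ₜ g) (c ⊗ₜ l)) =
      (a ⊗ₜ 1) * (ξ.actTmulOne b *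
        toConv ((ξ.smashRight c l).ofConv ∘ₗ LinearMap.mulRight k g)) h := by
  rw [hμ.tmul_tmul_eq_sum b c l (ℛ k g), map_sum, ξ.smashRight_comp_mulRight c l (ℛ k g),
    Finset.mul_sum, ofConv_sum, LinearMap.sum_apply, Finset.mul_sum]
  refine Finset.sum_congr rfl fun i _ => ?_
  rw [hμ.tmul_tmul, smashRight, actTmulOne_mul_act, mul_assoc]

lemma assoc (x y z : A ⊗[k] H) : μ (μ x y) z = μ x (μ y z) := by
  induction x using TensorProduct.induction_on with
  | zero => simp
  | add x x' hx hx' => simp [hx, hx']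
  | tmul a h =>
    induction y using TensorProduct.induction_on with
    | zero => simp
    | add y y' hy hy' => simp [hy, hy']
    | tmul b g =>
      induction z using TensorProduct.induction_on with
      | zero => simp
      | add z z' hz hz' => simp [hz, hz']
      | tmul c l => rw [hμ.tmul_tmul_tmul_left, hμ.tmul_tmul_tmul_right]

lemma tmul_one_tmul (a b : A) (g : H) : μ (a ⊗ₜ 1) (b ⊗ₜ g) = (a * b) ⊗ₜ g := by
  rw [hμ.tmul_tmul, smashRight_apply_one, Algebra.TensorProduct.tmul_mul_tmul, one_mul]

lemma one_tmul_one_apply (x : A ⊗[k] H) : μ (1 ⊗ₜ 1) x = x := by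
  induction x using TensorProduct.induction_on with
  | zero => simp
  | add x y hx hy => rw [map_add, hx, hy]
  | tmul b g => rw [hμ.tmul_one_tmul, one_mul]

end SmashMulFormula

/-- The partial smash product `A # H = (A ⊗ H)(1_A ⊗ 1_H)` is an associative algebra with
identity `1_A # 1_H`, and `a ↦ a # 1_H` is an injective algebra homomorphism into it. -/
theorem smash_assoc_unital (ξ : PartialModuleAlgebra k H A)
    (μ : (A ⊗[k] H) →ₗ[k] (A ⊗[k] H) →ₗ[k] (A ⊗[k] H)) (hμ : SmashMulFormula k ξ μ) :
    -- the corner subspace `S = (A ⊗ H)(1_A ⊗ 1_H)`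
    let e : A ⊗[k] H := (1 : A) ⊗ₜ[k] (1 : H)
    let S : Submodule k (A ⊗[k] H) := LinearMap.range (μ.flip e)
    let f : A → A ⊗[k] H := fun a => μ (a ⊗ₜ[k] (1 : H)) e
    -- `S` is closed under multiplication
    (∀ x ∈ S, ∀ y ∈ S, μ x y ∈ S) ∧
    -- associativity
    (∀ x ∈ S, ∀ y ∈ S, ∀ z ∈ S, μ (μ x y) z = μ x (μ y z)) ∧
    -- `e = 1_A # 1_H` is a two-sided identity of `S`
    e ∈ S ∧ (∀ x ∈ S, μ x e = x ∧ μ e x = x) ∧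
    -- `f : a ↦ a # 1_H` is an injective algebra map into `S`
    (∀ a : A, f a ∈ S) ∧ Function.Injective f ∧
    (∀ a b : A, f (a * b) = μ (f a) (f b)) ∧ f 1 = e := by
  intro e S f
  have hf : ∀ a, f a = a ⊗ₜ 1 := fun a => by simpa using hμ.tmul_one_tmul a 1 1
  have hee : μ e e = e := hμ.one_tmul_one_apply e
  refine ⟨?_, fun x _ y _ z _ => hμ.assoc x y z, ⟨e, hee⟩, ?_, fun a => ⟨a ⊗ₜ 1, rfl⟩, ?_, ?_, hee⟩
  · rintro x - _ ⟨v, rfl⟩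
    exact ⟨μ x v, hμ.assoc x v e⟩
  · rintro _ ⟨u, rfl⟩
    exact ⟨(hμ.assoc u e e).trans (congrArg _ hee), hμ.one_tmul_one_apply _⟩
  · intro a b hab
    simp only [hf] at hab
    exact Algebra.TensorProduct.includeLeft_injective (S := k)
      (Bialgebra.algebraMap_injective H) hab
  · intro a b
    rw [hf, hf, hf, hμ.tmul_one_tmul]
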